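/- (First Rule of Trace-2 Matrices) Let A and B be the z-matrix and w-matrix of a singular sequence. If the trace of A equals 2 and a_{ii} = a_{jj} = 1 for some i ≠ j, then a_{ij} = 1 and a_{ik} = a_{jk} for every k ∉ {i, j}. The same statement holds with A replaced by B. -/

import Mathlib

open Filter Finset

/-- `Zq δ z k l` is the quantity `Z_{lk} = δ_{kl}^3 · (z_k − z_l)`
(and, applied to `w`, the quantity `W_{lk}`). -/
noncomputable def Zq {n : ℕ} (δ : Fin n → Fin n → ℂ) (z : Fin n → ℂ) (k l : Fin n) : ℂ :=
  δ k l ^ 3 * (z k - z l)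

/-- A singular sequence of normalized central configurations for the masses `m`:
sequences `z^{(N)}, w^{(N)} ∈ ℂ^n`, symmetric `δ^{(N)}`, and positive reals `ε_N → 0`
such that every term satisfies the central configuration equations
`z_k = ∑_{l≠k} m_l Z_{lk}`, `w_k = ∑_{l≠k} m_l W_{lk}`, the normalization
`δ_{kl}^2 z_{kl} w_{kl} = 1` (`k ≠ l`), the maximum of the `|z_k|, |Z_{kl}|`
(resp. `|w_k|, |W_{kl}|`) equals `ε_N^{-2}`, and all the sequences
`ε_N^2 z_k, ε_N^2 w_k, ε_N^2 Z_{kl}, ε_N^2 W_{kl}` converge. -/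
structure SingularSeq (n : ℕ) (m : Fin n → ℂ) : Type where
  z : ℕ → Fin n → ℂ
  w : ℕ → Fin n → ℂ
  delta : ℕ → Fin n → Fin n → ℂ
  eps : ℕ → ℝ
  eps_pos : ∀ N, 0 < eps N
  eps_lim : Tendsto eps atTop (nhds 0)
  delta_symm : ∀ N, ∀ k l : Fin n, delta N k l = delta N l k
  eq_z : ∀ N, ∀ k : Fin n, z N k = ∑ l ∈ univ.erase k, m l * Zq (delta N) (z N) k l
  eq_w : ∀ N, ∀ k : Fin n, w N k = ∑ l ∈ univ.erase k, m l * Zq (delta N) (w N) k l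
  normalize : ∀ N, ∀ k l : Fin n, k ≠ l →
    delta N k l ^ 2 * (z N l - z N k) * (w N l - w N k) = 1
  maxZ : ∀ N, IsGreatest
      ({x : ℝ | ∃ k, x = ‖z N k‖} ∪
        {x : ℝ | ∃ k l, k ≠ l ∧ x = ‖Zq (delta N) (z N) k l‖})
      (eps N ^ (-2 : ℤ))
  maxW : ∀ N, IsGreatest
      ({x : ℝ | ∃ k, x = ‖w N k‖} ∪
        {x : ℝ | ∃ k l, k ≠ l ∧ x = ‖Zq (delta N) (w N) k l‖})
      (eps N ^ (-2 : ℤ))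
  conv_z : ∀ k : Fin n, ∃ L : ℂ,
    Tendsto (fun N => (eps N : ℂ) ^ 2 * z N k) atTop (nhds L)
  conv_w : ∀ k : Fin n, ∃ L : ℂ,
    Tendsto (fun N => (eps N : ℂ) ^ 2 * w N k) atTop (nhds L)
  conv_Z : ∀ k l : Fin n, k ≠ l → ∃ L : ℂ,
    Tendsto (fun N => (eps N : ℂ) ^ 2 * Zq (delta N) (z N) k l) atTop (nhds L)
  conv_W : ∀ k l : Fin n, k ≠ l → ∃ L : ℂ,
    Tendsto (fun N => (eps N : ℂ) ^ 2 * Zq (delta N) (w N) k l) atTop (nhds L)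

/-- `A` and `B` are the z-matrix and the w-matrix of the singular sequence `S`:
symmetric `{0,1}`-matrices whose entries record which of the (convergent) sequences
`ε_N^2 z_i`, `ε_N^2 Z_{ij}` (resp. `ε_N^2 w_i`, `ε_N^2 W_{ij}`) have nonzero limit. -/
structure IsZWMatrices {n : ℕ} {m : Fin n → ℂ} (S : SingularSeq n m)
    (A B : Matrix (Fin n) (Fin n) ℕ) : Prop where
  zeroOne_A : ∀ i j, A i j = 0 ∨ A i j = 1
  symm_A : ∀ i j, A i j = A j i
  zeroOne_B : ∀ i j, B i j = 0 ∨ B i j = 1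
  symm_B : ∀ i j, B i j = B j i
  diag_A : ∀ i, A i i = 1 ↔
    ¬ Tendsto (fun N => (S.eps N : ℂ) ^ 2 * S.z N i) atTop (nhds 0)
  off_A : ∀ i j, i ≠ j → (A i j = 1 ↔
    ¬ Tendsto (fun N => (S.eps N : ℂ) ^ 2 * Zq (S.delta N) (S.z N) i j) atTop (nhds 0))
  diag_B : ∀ i, B i i = 1 ↔
    ¬ Tendsto (fun N => (S.eps N : ℂ) ^ 2 * S.w N i) atTop (nhds 0)
  off_B : ∀ i j, i ≠ j → (B i j = 1 ↔
    ¬ Tendsto (fun N => (S.eps N : ℂ) ^ 2 * Zq (S.delta N) (S.w N) i j) atTop (nhds 0))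

/-!
Write `ζ_k` for the limit of `ε² z_k`. Trace 2 forces `ζ` to vanish off `{i, j}`, and the
centre of mass relation `∑ m_k z_k = 0` gives `m_i ζ_i + m_j ζ_j = 0`, so `ζ_i ≠ ζ_j` since
`m_i + m_j ≠ 0`. Hence `ε² z_{xl}` has a nonzero limit for `x ∈ {i, j}` and every `l ≠ x`, and
the identity `W_{xl}³ z_{xl}⁴ = Z_{xl}` (a consequence of the normalization) gives
`W_{xl} = O(ε²)`; by the equations `w_x = ∑ m_l W_{lx}`, also `w_i, w_j = O(ε²)`.
The second identity `Z_{kl}² z_{kl} w_{kl}³ = 1` shows that `ε² Z_{kl}` cannot tend to `0` once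
`w_{kl} = O(ε²)`, which gives `a_{ij} = 1`. Read the other way, it shows that `a_{ik} = 1` forces
`w_{ik} = O(ε²)`, hence `w_{jk} = O(ε²)` and `a_{jk} = 1`. Exchanging `z` and `w` gives the rule
for `B`.
-/

open Asymptotics Topology

theorem Asymptotics.isBigO_of_pow_eq_mul {α 𝕜 : Type*} [NormedField 𝕜] {l : Filter α}
    {f g a : α → 𝕜} {c : 𝕜} {k : ℕ} (hk : k ≠ 0) (ha : Tendsto a l (𝓝 c))
    (h : ∀ x, f x ^ k = a x * g x ^ k) : f =O[l] g :=
  IsBigO.of_pow hk <| ((ha.isBigO_one 𝕜).mul (isBigO_refl (g ^ k) l)).congr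
    (fun x => (h x).symm) fun _ => one_mul _

theorem Matrix.diag_eq_zero_of_trace_eq_two {ι : Type*} [Fintype ι] [DecidableEq ι]
    {A : Matrix ι ι ℕ} (htr : A.trace = 2) {i j k : ι} (hij : i ≠ j) (hi : A i i = 1)
    (hj : A j j = 1) (hki : k ≠ i) (hkj : k ≠ j) : A k k = 0 := by
  have hle : ∑ x ∈ {i, j, k}, A x x ≤ A.trace := Finset.sum_le_sum_of_subset (subset_univ _)
  rw [sum_insert (by simp [hij, hki.symm]), sum_pair hkj.symm, htr, hi, hj] at hle
  omega

theorem ne_of_sum_mul_eq_zero {ι K : Type*} [Fintype ι] [Field K] {m ζ : ι → K} {i j : ι}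
    (hij : i ≠ j) (hm : m i + m j ≠ 0) (hsum : ∑ k, m k * ζ k = 0)
    (hζ : ∀ k, k ≠ i → k ≠ j → ζ k = 0) (hj : ζ j ≠ 0) : ζ i ≠ ζ j := by
  rw [sum_eq_add_of_mem i j (mem_univ i) (mem_univ j) hij
    fun k _ hk => by rw [hζ k hk.1 hk.2, mul_zero]] at hsum
  intro h
  rw [h, ← add_mul] at hsum
  exact mul_ne_zero hm hj hsum

namespace SingularSeq

variable {n : ℕ} {m : Fin n → ℂ} (S : SingularSeq n m)

def swap : SingularSeq n m where
  z := S.w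
  w := S.z
  delta := S.delta
  eps := S.eps
  eps_pos := S.eps_pos
  eps_lim := S.eps_lim
  delta_symm := S.delta_symm
  eq_z := S.eq_w
  eq_w := S.eq_z
  normalize N k l h := by linear_combination S.normalize N k l h
  maxZ := S.maxW
  maxW := S.maxZ
  conv_z := S.conv_w
  conv_w := S.conv_z
  conv_Z := S.conv_W
  conv_W := S.conv_Z

noncomputable def zLim (k : Fin n) : ℂ := (S.conv_z k).choose

theorem tendsto_zLim (k : Fin n) :
    Tendsto (fun N => (S.eps N : ℂ) ^ 2 * S.z N k) atTop (𝓝 (S.zLim k)) :=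
  (S.conv_z k).choose_spec

theorem tendsto_zLim_sub (k l : Fin n) :
    Tendsto (fun N => (S.eps N : ℂ) ^ 2 * (S.z N k - S.z N l)) atTop
      (𝓝 (S.zLim k - S.zLim l)) := by
  simpa only [mul_sub] using (S.tendsto_zLim k).sub (S.tendsto_zLim l)

theorem eps_ne_zero (N : ℕ) : (S.eps N : ℂ) ≠ 0 :=
  Complex.ofReal_ne_zero.2 (S.eps_pos N).ne'

variable {N : ℕ} {k l : Fin n}

theorem delta_sq_mul_z_sub_mul_w_sub (hkl : k ≠ l) :
    S.delta N k l ^ 2 * (S.z N k - S.z N l) * (S.w N k - S.w N l) = 1 := by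
  linear_combination S.normalize N k l hkl

theorem z_sub_ne_zero (hkl : k ≠ l) : S.z N k - S.z N l ≠ 0 := fun h => by
  simpa [h] using S.delta_sq_mul_z_sub_mul_w_sub (N := N) hkl

theorem Zq_z_sq_mul_mul_pow_three (hkl : k ≠ l) :
    Zq (S.delta N) (S.z N) k l ^ 2 * (S.z N k - S.z N l) * (S.w N k - S.w N l) ^ 3 = 1 := by
  rw [← one_pow 3, ← S.delta_sq_mul_z_sub_mul_w_sub hkl, Zq]
  ring

theorem Zq_w_pow_three_mul (hkl : k ≠ l) :
    Zq (S.delta N) (S.w N) k l ^ 3 * (S.z N k - S.z N l) ^ 4 = Zq (S.delta N) (S.z N) k l := by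
  rw [Zq, Zq, ← mul_one (_ * (S.z N k - S.z N l)), ← one_pow 3,
    ← S.delta_sq_mul_z_sub_mul_w_sub hkl]
  ring

theorem sum_mul_z_eq_zero (N : ℕ) : ∑ k, m k * S.z N k = 0 := by
  set F : Fin n → Fin n → ℂ := fun k l => m k * m l * Zq (S.delta N) (S.z N) k l
  have hrow : ∀ k, m k * S.z N k = ∑ l, F k l := fun k => by
    rw [S.eq_z N k, mul_sum, ← sum_erase univ (f := F k) (a := k) (by simp [F, Zq])]
    exact sum_congr rfl fun l _ => by ring
  have hanti : ∀ k l, F k l = -F l k := fun k l => by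
    simp only [F, Zq, S.delta_symm N l k]
    ring
  rw [sum_congr rfl fun k _ => hrow k, ← self_eq_neg]
  calc ∑ k, ∑ l, F k l = ∑ l, ∑ k, -F l k := by
        rw [sum_comm]; exact sum_congr rfl fun l _ => sum_congr rfl fun k _ => hanti k l
    _ = -∑ l, ∑ k, F l k := by simp only [sum_neg_distrib]

theorem sum_mul_zLim_eq_zero : ∑ k, m k * S.zLim k = 0 := by
  refine tendsto_nhds_unique (tendsto_finsetSum _ fun k _ => (S.tendsto_zLim k).const_mul (m k)) ?_
  simpa only [mul_left_comm (m _), ← mul_sum, S.sum_mul_z_eq_zero, mul_zero] using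
    tendsto_const_nhds

theorem isBigO_Zq_w_of_zLim_ne (hkl : S.zLim k ≠ S.zLim l) :
    (fun N => Zq (S.delta N) (S.w N) k l) =O[atTop] fun N => (S.eps N : ℂ) ^ 2 := by
  have hne : k ≠ l := fun h => hkl (h ▸ rfl)
  obtain ⟨Λ, hΛ⟩ := S.conv_Z k l hne
  -- `W³ = (ε² Z) / (ε² z_{kl})⁴ · ε⁶`
  refine isBigO_of_pow_eq_mul three_ne_zero
    (hΛ.div ((S.tendsto_zLim_sub k l).pow 4) (pow_ne_zero 4 (sub_ne_zero.2 hkl))) fun N => ?_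
  have := S.eps_ne_zero N
  have := S.z_sub_ne_zero (N := N) hne
  simp only [Pi.div_apply]
  rw [← S.Zq_w_pow_three_mul hne]
  field_simp

theorem isBigO_w_of_forall_zLim_ne (h : ∀ l, l ≠ k → S.zLim k ≠ S.zLim l) :
    (fun N => S.w N k) =O[atTop] fun N => (S.eps N : ℂ) ^ 2 :=
  (IsBigO.fun_sum fun l hl => (S.isBigO_Zq_w_of_zLim_ne (h l (mem_erase.1 hl).1)).const_mul_left
    (m l)).congr (fun N => (S.eq_w N k).symm) fun _ => rfl

theorem isBigO_w_sub_of_zLim_ne (hkl : S.zLim k ≠ S.zLim l)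
    (hZ : ¬ Tendsto (fun N => (S.eps N : ℂ) ^ 2 * Zq (S.delta N) (S.z N) k l) atTop (𝓝 0)) :
    (fun N => S.w N k - S.w N l) =O[atTop] fun N => (S.eps N : ℂ) ^ 2 := by
  have hne : k ≠ l := fun h => hkl (h ▸ rfl)
  obtain ⟨Λ, hΛ⟩ := S.conv_Z k l hne
  have hΛ0 : Λ ≠ 0 := fun h => hZ (h ▸ hΛ)
  -- `w_{kl}³ = ((ε² Z)² (ε² z_{kl}))⁻¹ · ε⁶`
  refine isBigO_of_pow_eq_mul three_ne_zero
    ((hΛ.pow 2 |>.mul (S.tendsto_zLim_sub k l)).inv₀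
      (mul_ne_zero (pow_ne_zero 2 hΛ0) (sub_ne_zero.2 hkl))) fun N => ?_
  have := S.eps_ne_zero N
  have := S.z_sub_ne_zero (N := N) hne
  have : Zq (S.delta N) (S.z N) k l ≠ 0 := fun h0 => by
    simpa [h0] using S.Zq_z_sq_mul_mul_pow_three (N := N) hne
  field_simp
  linear_combination S.Zq_z_sq_mul_mul_pow_three hne

theorem not_tendsto_eps_sq_mul_Zq_of_isBigO (hkl : k ≠ l)
    (hw : (fun N => S.w N k - S.w N l) =O[atTop] fun N => (S.eps N : ℂ) ^ 2) :
    ¬ Tendsto (fun N => (S.eps N : ℂ) ^ 2 * Zq (S.delta N) (S.z N) k l) atTop (𝓝 0) := by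
  intro hP
  set P := fun N => (S.eps N : ℂ) ^ 2 * Zq (S.delta N) (S.z N) k l
  set e := fun N => ((S.eps N : ℂ) ^ 2) ^ 3
  -- `ε⁶ = P · (P · ε² z_{kl} · w_{kl}³)`, and the second factor is `O(ε⁶)`
  have he : e =O[atTop] fun N => P N * e N :=
    ((isBigO_refl P atTop).mul ((hP.isBigO_one ℂ).mul
      (((S.tendsto_zLim_sub k l).isBigO_one ℂ).mul (hw.pow 3)))).congr
      (fun N => by
        rw [← mul_one (e N), ← S.Zq_z_sq_mul_mul_pow_three (N := N) hkl]
        ring)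
      fun _ => by ring
  have hPe : (fun N => P N * e N) =o[atTop] e :=
    ((isLittleO_one_iff ℂ).2 hP).mul_isBigO (isBigO_refl e atTop) |>.congr_right fun _ => one_mul _
  exact isLittleO_irrefl
    (Frequently.of_forall fun N => pow_ne_zero 3 (pow_ne_zero 2 (S.eps_ne_zero N)))
    (he.trans_isLittleO hPe)

end SingularSeq

namespace IsZWMatrices

variable {n : ℕ} {m : Fin n → ℂ} {S : SingularSeq n m} {A B : Matrix (Fin n) (Fin n) ℕ}

theorem swap (hAB : IsZWMatrices S A B) : IsZWMatrices S.swap B A where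
  zeroOne_A := hAB.zeroOne_B
  symm_A := hAB.symm_B
  zeroOne_B := hAB.zeroOne_A
  symm_B := hAB.symm_A
  diag_A := hAB.diag_B
  off_A := hAB.off_B
  diag_B := hAB.diag_A
  off_B := hAB.off_A

theorem diag_eq_one_iff (hAB : IsZWMatrices S A B) (k : Fin n) : A k k = 1 ↔ S.zLim k ≠ 0 :=
  (hAB.diag_A k).trans <| not_congr
    ⟨fun h => tendsto_nhds_unique (S.tendsto_zLim k) h, fun h => h ▸ S.tendsto_zLim k⟩

theorem zLim_ne_of_trace_eq_two (hAB : IsZWMatrices S A B) {i j : Fin n}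
    (hm : m i + m j ≠ 0) (htr : A.trace = 2) (hij : i ≠ j) (hi : A i i = 1) (hj : A j j = 1)
    (l : Fin n) (hli : l ≠ i) : S.zLim i ≠ S.zLim l := by
  have hζ : ∀ k, k ≠ i → k ≠ j → S.zLim k = 0 := fun k hki hkj => by
    by_contra hk
    have h1 := (hAB.diag_eq_one_iff k).2 hk
    have h0 := Matrix.diag_eq_zero_of_trace_eq_two htr hij hi hj hki hkj
    omega
  by_cases hlj : l = j
  · exact hlj ▸ ne_of_sum_mul_eq_zero hij hm S.sum_mul_zLim_eq_zero hζ
      ((hAB.diag_eq_one_iff j).1 hj)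
  · rw [hζ l hli hlj]
    exact (hAB.diag_eq_one_iff i).1 hi

theorem eq_one_of_isBigO_w (hAB : IsZWMatrices S A B) {x y k : Fin n}
    (hx : (fun N => S.w N x) =O[atTop] fun N => (S.eps N : ℂ) ^ 2)
    (hy : (fun N => S.w N y) =O[atTop] fun N => (S.eps N : ℂ) ^ 2)
    (hxk : S.zLim x ≠ S.zLim k) (hyk : y ≠ k) (h : A x k = 1) : A y k = 1 := by
  have hwxk := S.isBigO_w_sub_of_zLim_ne hxk ((hAB.off_A x k fun h => hxk (h ▸ rfl)).1 h)
  refine (hAB.off_A y k hyk).2 (S.not_tendsto_eps_sq_mul_Zq_of_isBigO hyk ?_)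
  exact ((hwxk.sub hx).add hy).congr (fun N => by ring) fun _ => rfl

theorem first_rule_z (hAB : IsZWMatrices S A B) {i j : Fin n} (hm : m i + m j ≠ 0)
    (htr : A.trace = 2) (hij : i ≠ j) (hi : A i i = 1) (hj : A j j = 1) :
    A i j = 1 ∧ ∀ k, k ≠ i → k ≠ j → A i k = A j k := by
  have hζi := hAB.zLim_ne_of_trace_eq_two hm htr hij hi hj
  have hζj := hAB.zLim_ne_of_trace_eq_two (add_comm (m i) _ ▸ hm) htr hij.symm hj hi
  have hwi := S.isBigO_w_of_forall_zLim_ne hζi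
  have hwj := S.isBigO_w_of_forall_zLim_ne hζj
  refine ⟨(hAB.off_A i j hij).2 (S.not_tendsto_eps_sq_mul_Zq_of_isBigO hij (hwi.sub hwj)),
    fun k hki hkj => ?_⟩
  have hik := hAB.eq_one_of_isBigO_w hwj hwi (hζj k hkj) hki.symm
  have hjk := hAB.eq_one_of_isBigO_w hwi hwj (hζi k hki) hkj.symm
  rcases hAB.zeroOne_A i k with h | h <;> rcases hAB.zeroOne_A j k with h' | h' <;> omega

end IsZWMatrices

theorem first_rule_of_trace_two_matrices_general (n : ℕ) (m : Fin n → ℂ)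
    (hm : ∀ I : Finset (Fin n), I.Nonempty → ∑ k ∈ I, m k ≠ 0)
    (S : SingularSeq n m) (A B : Matrix (Fin n) (Fin n) ℕ)
    (hAB : IsZWMatrices S A B) :
    (Matrix.trace A = 2 →
      ∀ i j : Fin n, i ≠ j → A i i = 1 → A j j = 1 →
        A i j = 1 ∧ ∀ k : Fin n, k ≠ i → k ≠ j → A i k = A j k) ∧
    (Matrix.trace B = 2 →
      ∀ i j : Fin n, i ≠ j → B i i = 1 → B j j = 1 →
        B i j = 1 ∧ ∀ k : Fin n, k ≠ i → k ≠ j → B i k = B j k) := by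
  have hpair : ∀ i j : Fin n, i ≠ j → m i + m j ≠ 0 := fun i j hij => by
    simpa [sum_pair hij] using hm {i, j} (insert_nonempty i {j})
  exact ⟨fun htr i j hij => hAB.first_rule_z (hpair i j hij) htr hij,
    fun htr i j hij => hAB.swap.first_rule_z (hpair i j hij) htr hij⟩

theorem first_rule_of_trace_two_matrices (n : ℕ) (hn : 2 ≤ n) (m : Fin n → ℂ)
    (hm : ∀ I : Finset (Fin n), I.Nonempty → ∑ k ∈ I, m k ≠ 0)
    (S : SingularSeq n m) (A B : Matrix (Fin n) (Fin n) ℕ)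
    (hAB : IsZWMatrices S A B) :
    (Matrix.trace A = 2 →
      ∀ i j : Fin n, i ≠ j → A i i = 1 → A j j = 1 →
        A i j = 1 ∧ ∀ k : Fin n, k ≠ i → k ≠ j → A i k = A j k) ∧
    (Matrix.trace B = 2 →
      ∀ i j : Fin n, i ≠ j → B i i = 1 → B j j = 1 →
        B i j = 1 ∧ ∀ k : Fin n, k ≠ i → k ≠ j → B i k = B j k) :=
  first_rule_of_trace_two_matrices_general n m hm S A B hAB
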